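/- Let E be a real Banach space and 1 ≤ q ≤ p < ∞. Then ‖·‖_{p,q} is a lattice norm on H_{p,q}[E]: ‖f‖_{p,q} = 0 if and only if f = 0, it is absolutely homogeneous and satisfies the triangle inequality, and |f| ≤ |g| pointwise implies ‖f‖_{p,q} ≤ ‖g‖_{p,q}. Moreover, ‖·‖_{p,q} is p-convex with constant 1: for every n ∈ ℕ and f_1,…,f_n ∈ H_{p,q}[E], the pointwise-defined function (Σ_{k=1}^n |f_k|^p)^{1/p} belongs to H_{p,q}[E] and ‖(Σ_{k=1}^n |f_k|^p)^{1/p}‖_{p,q} ≤ (Σ_{k=1}^n ‖f_k‖_{p,q}^p)^{1/p}. -/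

import Mathlib

open scoped ENNReal

/-- A function `f : E* → ℝ` is positively homogeneous. -/
def PosHomog {E : Type*} [NormedAddCommGroup E] [NormedSpace ℝ E]
    (f : (E →L[ℝ] ℝ) → ℝ) : Prop :=
  ∀ (c : ℝ), 0 ≤ c → ∀ φ : E →L[ℝ] ℝ, f (c • φ) = c * f φ

/-- The weak `q`-summing norm of a finite family in `E*`. -/
noncomputable def weakSumNorm {E : Type*} [NormedAddCommGroup E] [NormedSpace ℝ E]
    (q : ℝ) {n : ℕ} (xs : Fin n → (E →L[ℝ] ℝ)) : ℝ :=
  sSup ((fun x : E => (∑ k, |xs k x| ^ q) ^ (1 / q)) '' Metric.closedBall 0 1)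

/-- The `(p,q)`-summing norm of `f : E* → ℝ`, with values in `[0,∞]`. -/
noncomputable def pqNorm {E : Type*} [NormedAddCommGroup E] [NormedSpace ℝ E]
    (p q : ℝ) (f : (E →L[ℝ] ℝ) → ℝ) : ℝ≥0∞ :=
  ⨆ (n : ℕ) (xs : Fin n → (E →L[ℝ] ℝ)) (_ : weakSumNorm q xs ≤ 1),
    ENNReal.ofReal ((∑ k, |f (xs k)| ^ p) ^ (1 / p))

/-!
Every admissible family `x₁*, …, xₙ*` (one with `w_q ≤ 1`) turns `f` into the vector
`(f(xₖ*))ₖ ∈ ℓ^p_n`, and `‖f‖_{p,q}` is the supremum of the `ℓ^p` norms of these vectors. Absolute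
homogeneity, the triangle inequality (Minkowski) and monotonicity in `|f|` are therefore inherited
from the `ℓ^p` norm, family by family. For `p`-convexity, the `p`-th power of the `ℓ^p` norm of
`((Σₖ |fₖ|^p)^{1/p}(xⱼ*))ⱼ` is the double sum `Σⱼ Σₖ |fₖ(xⱼ*)|^p`; summing over `j` first bounds it
by `Σₖ ‖fₖ‖^p`. Finally, a single functional of norm at most `1` is an admissible family, so
`‖f‖_{p,q} = 0` forces `f` to vanish on the unit ball of `E*`, hence everywhere by homogeneity.
-/

open Finset

lemma Real.sum_mul_rpow_rpow_inv {ι : Type*} (s : Finset ι) {p c : ℝ} (hp : p ≠ 0) (hc : 0 ≤ c)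
    {a : ι → ℝ} (ha : ∀ k ∈ s, 0 ≤ a k) :
    (∑ k ∈ s, (c * a k) ^ p) ^ (1 / p) = c * (∑ k ∈ s, a k ^ p) ^ (1 / p) := by
  have hsum : ∑ k ∈ s, (c * a k) ^ p = c ^ p * ∑ k ∈ s, a k ^ p := by
    rw [mul_sum]
    exact sum_congr rfl fun k hk => Real.mul_rpow hc (ha k hk)
  rw [hsum, Real.mul_rpow (by positivity) (sum_nonneg fun k hk => Real.rpow_nonneg (ha k hk) p),
    ← Real.rpow_mul hc, mul_one_div_cancel hp, Real.rpow_one]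

section PosHomog

variable {E : Type*} [NormedAddCommGroup E] [NormedSpace ℝ E]

lemma PosHomog.eq_zero_of_forall_norm_le_one {f : (E →L[ℝ] ℝ) → ℝ} (hf : PosHomog f)
    (h : ∀ φ : E →L[ℝ] ℝ, ‖φ‖ ≤ 1 → f φ = 0) : f = 0 := by
  funext φ
  set c := max ‖φ‖ 1
  have hc : 0 < c := lt_max_of_lt_right one_pos
  have hψ : ‖c⁻¹ • φ‖ ≤ 1 := by
    rw [norm_smul, norm_inv, Real.norm_of_nonneg hc.le, inv_mul_le_iff₀ hc, mul_one]
    exact le_max_left _ _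
  rw [Pi.zero_apply, ← smul_inv_smul₀ hc.ne' φ, hf c hc.le, h _ hψ, mul_zero]

lemma PosHomog.sum_rpow_rpow_inv {p : ℝ} (hp : p ≠ 0) {n : ℕ} {F : Fin n → (E →L[ℝ] ℝ) → ℝ}
    (hF : ∀ k, PosHomog (F k)) : PosHomog fun φ => (∑ k, |F k φ| ^ p) ^ (1 / p) := by
  intro c hc φ
  simp only [hF _ c hc φ, abs_mul, abs_of_nonneg hc]
  exact Real.sum_mul_rpow_rpow_inv _ hp hc fun k _ => abs_nonneg _

end PosHomog

section pqNorm

variable {E : Type*} [NormedAddCommGroup E] [NormedSpace ℝ E] {p q : ℝ}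

lemma weakSumNorm_single_le_one (hq : q ≠ 0) {φ : E →L[ℝ] ℝ} (hφ : ‖φ‖ ≤ 1) :
    weakSumNorm q ![φ] ≤ 1 := by
  refine Real.sSup_le ?_ zero_le_one
  rintro _ ⟨x, hx, rfl⟩
  rw [mem_closedBall_zero_iff] at hx
  simp only [Fin.sum_univ_one, Matrix.cons_val_zero]
  rw [← Real.rpow_mul (abs_nonneg _), mul_one_div_cancel hq, Real.rpow_one, ← Real.norm_eq_abs]
  exact φ.le_of_opNorm_le hφ x |>.trans (by simpa using hx)

lemma le_pqNorm (p q : ℝ) (f : (E →L[ℝ] ℝ) → ℝ) {n : ℕ} {xs : Fin n → (E →L[ℝ] ℝ)}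
    (h : weakSumNorm q xs ≤ 1) :
    ENNReal.ofReal ((∑ k, |f (xs k)| ^ p) ^ (1 / p)) ≤ pqNorm p q f :=
  le_iSup_of_le n <| le_iSup_of_le xs <| le_iSup_of_le h le_rfl

lemma pqNorm_le {f : (E →L[ℝ] ℝ) → ℝ} {C : ℝ≥0∞}
    (h : ∀ (n : ℕ) (xs : Fin n → (E →L[ℝ] ℝ)), weakSumNorm q xs ≤ 1 →
      ENNReal.ofReal ((∑ k, |f (xs k)| ^ p) ^ (1 / p)) ≤ C) :
    pqNorm p q f ≤ C :=
  iSup_le fun n => iSup_le fun xs => iSup_le fun hxs => h n xs hxs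

lemma ofReal_sum_rpow_le_pqNorm_rpow (hp : 0 < p) (f : (E →L[ℝ] ℝ) → ℝ) {n : ℕ}
    {xs : Fin n → (E →L[ℝ] ℝ)} (h : weakSumNorm q xs ≤ 1) :
    ENNReal.ofReal (∑ k, |f (xs k)| ^ p) ≤ pqNorm p q f ^ p := by
  have hS : 0 ≤ ∑ k, |f (xs k)| ^ p := by positivity
  calc ENNReal.ofReal (∑ k, |f (xs k)| ^ p)
      = ENNReal.ofReal ((∑ k, |f (xs k)| ^ p) ^ (1 / p)) ^ p := by
        rw [ENNReal.ofReal_rpow_of_nonneg (by positivity) hp.le,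
          one_div, Real.rpow_inv_rpow hS hp.ne']
    _ ≤ pqNorm p q f ^ p := ENNReal.rpow_le_rpow (le_pqNorm p q f h) hp.le

lemma ofReal_abs_le_pqNorm (hp : p ≠ 0) (hq : q ≠ 0) (f : (E →L[ℝ] ℝ) → ℝ)
    {φ : E →L[ℝ] ℝ} (hφ : ‖φ‖ ≤ 1) :
    ENNReal.ofReal |f φ| ≤ pqNorm p q f := by
  simpa [← Real.rpow_mul (abs_nonneg _), mul_inv_cancel₀ hp]
    using le_pqNorm p q f (weakSumNorm_single_le_one hq hφ)

lemma pqNorm_zero (hp : p ≠ 0) : pqNorm p q (0 : (E →L[ℝ] ℝ) → ℝ) = 0 :=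
  nonpos_iff_eq_zero.mp <| pqNorm_le fun _ _ _ => by
    simp [Real.zero_rpow hp, Real.zero_rpow (inv_ne_zero hp)]

lemma pqNorm_eq_zero_iff (hp : p ≠ 0) (hq : q ≠ 0) {f : (E →L[ℝ] ℝ) → ℝ} (hf : PosHomog f) :
    pqNorm p q f = 0 ↔ f = 0 := by
  refine ⟨fun h0 => hf.eq_zero_of_forall_norm_le_one fun φ hφ => ?_, fun h => h ▸ pqNorm_zero hp⟩
  simpa [h0] using ofReal_abs_le_pqNorm hp hq f hφ

lemma pqNorm_const_mul (hp : p ≠ 0) (c : ℝ) (f : (E →L[ℝ] ℝ) → ℝ) :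
    pqNorm p q (fun φ => c * f φ) = ENNReal.ofReal |c| * pqNorm p q f := by
  have hfamily : ∀ (n : ℕ) (xs : Fin n → (E →L[ℝ] ℝ)),
      ENNReal.ofReal ((∑ k, |c * f (xs k)| ^ p) ^ (1 / p)) =
        ENNReal.ofReal |c| * ENNReal.ofReal ((∑ k, |f (xs k)| ^ p) ^ (1 / p)) := fun _ xs => by
    simp only [abs_mul, ← ENNReal.ofReal_mul (abs_nonneg c)]
    rw [Real.sum_mul_rpow_rpow_inv _ hp (abs_nonneg c) fun k _ => abs_nonneg _]
  simp only [pqNorm, hfamily, ENNReal.mul_iSup]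

lemma pqNorm_add_le (hp : 1 ≤ p) (f g : (E →L[ℝ] ℝ) → ℝ) :
    pqNorm p q (fun φ => f φ + g φ) ≤ pqNorm p q f + pqNorm p q g :=
  pqNorm_le fun _ xs hxs =>
    calc ENNReal.ofReal ((∑ k, |f (xs k) + g (xs k)| ^ p) ^ (1 / p))
        ≤ ENNReal.ofReal ((∑ k, |f (xs k)| ^ p) ^ (1 / p) + (∑ k, |g (xs k)| ^ p) ^ (1 / p)) :=
          ENNReal.ofReal_le_ofReal (Real.Lp_add_le _ _ _ hp)
      _ ≤ ENNReal.ofReal ((∑ k, |f (xs k)| ^ p) ^ (1 / p)) +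
            ENNReal.ofReal ((∑ k, |g (xs k)| ^ p) ^ (1 / p)) := ENNReal.ofReal_add_le
      _ ≤ pqNorm p q f + pqNorm p q g := add_le_add (le_pqNorm p q f hxs) (le_pqNorm p q g hxs)

lemma pqNorm_mono_abs (hp : 0 ≤ p) {f g : (E →L[ℝ] ℝ) → ℝ} (h : ∀ φ, |f φ| ≤ |g φ|) :
    pqNorm p q f ≤ pqNorm p q g :=
  pqNorm_le fun _ xs hxs => le_trans (ENNReal.ofReal_le_ofReal <| Real.rpow_le_rpow
    (by positivity) (sum_le_sum fun k _ => Real.rpow_le_rpow (abs_nonneg _) (h (xs k)) hp)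
    (by positivity)) (le_pqNorm p q g hxs)

lemma pqNorm_sum_rpow_rpow_inv_le (hp : 0 < p) {n : ℕ} (F : Fin n → (E →L[ℝ] ℝ) → ℝ) :
    pqNorm p q (fun φ => (∑ k, |F k φ| ^ p) ^ (1 / p)) ≤
      (∑ k, pqNorm p q (F k) ^ p) ^ (1 / p) := by
  refine pqNorm_le fun _ xs hxs => ?_
  have hpow : ∀ j, |(∑ k, |F k (xs j)| ^ p) ^ (1 / p)| ^ p = ∑ k, |F k (xs j)| ^ p := fun j => by
    rw [abs_of_nonneg (by positivity), one_div, Real.rpow_inv_rpow (by positivity) hp.ne']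
  calc ENNReal.ofReal ((∑ j, |(∑ k, |F k (xs j)| ^ p) ^ (1 / p)| ^ p) ^ (1 / p))
      = ENNReal.ofReal (∑ k, ∑ j, |F k (xs j)| ^ p) ^ (1 / p) := by
        rw [← ENNReal.ofReal_rpow_of_nonneg (by positivity) (by positivity), sum_congr rfl
          fun j _ => hpow j, sum_comm]
    _ = (∑ k, ENNReal.ofReal (∑ j, |F k (xs j)| ^ p)) ^ (1 / p) := by
        rw [ENNReal.ofReal_sum_of_nonneg fun k _ => by positivity]
    _ ≤ (∑ k, pqNorm p q (F k) ^ p) ^ (1 / p) := by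
        gcongr with k
        exact ofReal_sum_rpow_le_pqNorm_rpow hp (F k) hxs

end pqNorm

theorem pqNorm_is_pConvex_lattice_norm
    (E : Type*) [NormedAddCommGroup E] [NormedSpace ℝ E]
    (p q : ℝ) (hq : 1 ≤ q) (hqp : q ≤ p) :
    -- `‖f‖_{p,q} = 0` iff `f = 0`
    (∀ f : (E →L[ℝ] ℝ) → ℝ, PosHomog f → pqNorm p q f < ⊤ →
      (pqNorm p q f = 0 ↔ f = 0)) ∧
    -- absolute homogeneity
    (∀ (c : ℝ) (f : (E →L[ℝ] ℝ) → ℝ), PosHomog f → pqNorm p q f < ⊤ →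
      pqNorm p q (fun φ => c * f φ) = ENNReal.ofReal |c| * pqNorm p q f) ∧
    -- triangle inequality
    (∀ f g : (E →L[ℝ] ℝ) → ℝ, PosHomog f → pqNorm p q f < ⊤ →
      PosHomog g → pqNorm p q g < ⊤ →
      pqNorm p q (fun φ => f φ + g φ) ≤ pqNorm p q f + pqNorm p q g) ∧
    -- lattice norm property: `|f| ≤ |g|` pointwise implies `‖f‖_{p,q} ≤ ‖g‖_{p,q}`
    (∀ f g : (E →L[ℝ] ℝ) → ℝ, PosHomog f → PosHomog g →
      (∀ φ : E →L[ℝ] ℝ, |f φ| ≤ |g φ|) → pqNorm p q f ≤ pqNorm p q g) ∧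
    -- `p`-convexity with constant `1`
    (∀ (n : ℕ) (F : Fin n → (E →L[ℝ] ℝ) → ℝ),
      (∀ k, PosHomog (F k) ∧ pqNorm p q (F k) < ⊤) →
      PosHomog (fun φ => (∑ k, |F k φ| ^ p) ^ (1 / p)) ∧
      pqNorm p q (fun φ => (∑ k, |F k φ| ^ p) ^ (1 / p)) < ⊤ ∧
      pqNorm p q (fun φ => (∑ k, |F k φ| ^ p) ^ (1 / p)) ≤
        (∑ k, pqNorm p q (F k) ^ p) ^ (1 / p)) := by
  have hp : 1 ≤ p := hq.trans hqp
  have hp0 : 0 < p := one_pos.trans_le hp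
  refine ⟨fun f hf _ => pqNorm_eq_zero_iff hp0.ne' (by positivity) hf,
    fun c f _ _ => pqNorm_const_mul hp0.ne' c f,
    fun f g _ _ _ _ => pqNorm_add_le hp f g,
    fun f g _ _ h => pqNorm_mono_abs hp0.le h,
    fun n F hF => ⟨PosHomog.sum_rpow_rpow_inv hp0.ne' fun k => (hF k).1, ?_,
      pqNorm_sum_rpow_rpow_inv_le hp0 F⟩⟩
  have hbound_finite : (∑ k, pqNorm p q (F k) ^ p) ^ (1 / p) < ⊤ :=
    ENNReal.rpow_lt_top_of_nonneg (by positivity) <| ENNReal.sum_ne_top.mpr fun k _ =>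
      ENNReal.rpow_ne_top_of_nonneg hp0.le (hF k).2.ne
  exact (pqNorm_sum_rpow_rpow_inv_le hp0 F).trans_lt hbound_finite
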